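/- Let (E, S) be a set cover instance with E = {e_1,…,e_n̂} and S = {S_1,…,S_m̂} in which every element belongs to at least one set, let d, k be positive integers with d·k < n̂², let N = n̂² m̂ and l_j = |S_j|, and let I' be the capacitated house allocation instance constructed as follows: for each set S_j there are houses s_j^1,…,s_j^{l_j} of capacity 1 with dummy applicants t_j^1,…,t_j^{l_j} (t_j^l accepts only s_j^l), a house w_j of capacity N, and applicants a_j^1,…,a_j^N with preference a_j^l : x^l ≻ s_j^1 ≻ ⋯ ≻ s_j^{l_j} ≻ w_j; for each element e_i there is an applicant e_i whose preference list is f followed by the houses s_j^l such that e_i ∈ S_j and e_i is the l-th smallest-index element of S_j, in increasing order; there is a house f of capacity 1 with a dummy applicant f' accepting only f; and there are houses x^1,…,x^N of capacity 1 with dummy applicants y^1,…,y^N (y^l accepts only x^l). Suppose r is a capacity change vector with |r|_∞ ≤ d·k such that the instance with capacities q + r admits a perfect popular matching. Then the family J = {S_j : r[s_j^l] > 0 for some l} satisfies |J| ≤ d·k and the sets in J cover at least n̂ − d·k elements of E; consequently (E, S) admits a set cover using at most 2·d·k sets. -/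

import Mathlib

/-!
In a perfect popular matching every dummy applicant holds its unique house, and popularity
forbids two kinds of improvement: an applicant moving to a better house that is not full, and
a chain in which `p` takes a better house `h₁` from `z`, who takes a better house `h₂` from a
third applicant. An element applicant `e_i` that is not at `f` shares `s_j^l` with `t_j^l`,
which forces `r[s_j^l] > 0`; as `f` holds at most `d·k` applicants besides `f'`, the family `J`
misses at most `d·k` elements. For `j ∈ J` some `s_j^i` has capacity at least two, so no
`a_j^l` may be matched below it; hence the `a_j^l` that miss `x^l` all share one house
`s_j^{i₀}`, and there are at most `d·k` of them, while each `x^l` holds at most `d·k` of the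
`a_j^l`. Double counting gives `|J| (N - d·k) ≤ N d·k`, which forces `|J| ≤ d·k` because
`N = n̂² m̂ > m̂ d·k`. One extra set for each uncovered element then gives a cover by at most
`2·d·k` sets.
-/

noncomputable section

open Finset

attribute [local instance] Classical.propDecidable

/-- `Better l x y` means the (optional) house `x` is strictly preferred to the (optional)
house `y` according to the strict preference list `l` (earlier in the list = more
preferred); being matched to any acceptable house is preferred to being unmatched. -/
def Better {H : Type*} (l : List H) : Option H → Option H → Prop
  | some h, some h' => h ∈ l ∧ l.idxOf h < l.idxOf h'
  | some h, none => h ∈ l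
  | none, _ => False

/-- A capacitated house allocation instance: each applicant `a` has a strict preference
list `pref a` over her acceptable houses (most preferred first, acceptable = on the list),
and each house `h` has a capacity `cap h`. -/
structure HA (A H : Type*) where
  pref : A → List H
  cap : H → ℕ

namespace HA

variable {A H : Type*} [Fintype A]

/-- A matching assigns to each applicant at most one acceptable house,
respecting the houses' capacities. -/
def IsMatching (I : HA A H) (M : A → Option H) : Prop :=
  (∀ a h, M a = some h → h ∈ I.pref a) ∧
  ∀ h, (univ.filter fun a => M a = some h).card ≤ I.cap h

/-- A matching is perfect if every applicant is matched. -/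
def Perfect (M : A → Option H) : Prop := ∀ a, (M a).isSome

/-- `M'` dominates `M` if strictly more applicants prefer `M'` to `M` than
prefer `M` to `M'`. -/
def Dominates (I : HA A H) (M' M : A → Option H) : Prop :=
  (univ.filter fun a => Better (I.pref a) (M a) (M' a)).card <
    (univ.filter fun a => Better (I.pref a) (M' a) (M a)).card

/-- A matching is popular if no matching dominates it. -/
def Popular (I : HA A H) (M : A → Option H) : Prop :=
  I.IsMatching M ∧ ∀ M', I.IsMatching M' → ¬ I.Dominates M' M

/-- `M'` Pareto-dominates `M` if every applicant is at least as well off in `M'`,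
and some applicant is strictly better off. -/
def ParetoDominates (I : HA A H) (M' M : A → Option H) : Prop :=
  (∀ a, M' a = M a ∨ Better (I.pref a) (M' a) (M a)) ∧
  ∃ a, Better (I.pref a) (M' a) (M a)

/-- A matching is Pareto-optimal if no matching Pareto-dominates it. -/
def ParetoOptimal (I : HA A H) (M : A → Option H) : Prop :=
  I.IsMatching M ∧ ∀ M', I.IsMatching M' → ¬ I.ParetoDominates M' M

/-- The cardinality of a matching: the number of matched applicants. -/
def size (M : A → Option H) : ℕ := (univ.filter fun a => (M a).isSome).card

/-- `f(a)`: the most preferred acceptable house of `a` (if any). -/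
def fOpt (I : HA A H) (a : A) : Option H := (I.pref a).head?

/-- The admirers of a house `h`: the applicants whose most preferred house is `h`. -/
def admirers (I : HA A H) (h : H) : Finset A := univ.filter fun a => I.fOpt a = some h

/-- `s(a)`: equals `f(a)` if `f(a)` has at most `cap (f a)` admirers; otherwise the
most preferred acceptable house of `a` having strictly fewer admirers than its
capacity; `none` if no such house exists. -/
def sOpt (I : HA A H) (a : A) : Option H :=
  match (I.pref a).head? with
  | none => none
  | some h =>
    if (I.admirers h).card ≤ I.cap h then some h
    else (I.pref a).find? fun h' => decide ((I.admirers h').card < I.cap h')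

/-- `(a, h)` is an edge of the first/second-choice multigraph `G'`. -/
def InG' (I : HA A H) (a : A) (h : H) : Prop := I.fOpt a = some h ∨ I.sOpt a = some h

/-- The set of applicants matched to house `h` in `M`. -/
def matchedTo (M : A → Option H) (h : H) : Finset A := univ.filter fun a => M a = some h

/-- An admissible matching: every edge lies in `G'`; every house having at least as many
admirers as its capacity is saturated by admirers only; and every house having at most
as many admirers as its capacity has all its admirers matched to it. -/
def Admissible (I : HA A H) (M : A → Option H) : Prop :=
  I.IsMatching M ∧
  (∀ a h, M a = some h → I.InG' a h) ∧
  (∀ h, I.cap h ≤ (I.admirers h).card →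
      (matchedTo M h).card = I.cap h ∧ ∀ a ∈ matchedTo M h, I.fOpt a = some h) ∧
  (∀ h, (I.admirers h).card ≤ I.cap h → ∀ a ∈ I.admirers h, M a = some h)

end HA

/-- Houses of the set-cover reduction: `s_j^l` (for `l < |S_j|`), `w_j`, `f`, and
`x^1, …, x^N` where `N = n̂² m̂`. -/
abbrev HouseSC (n m : ℕ) (S : Fin m → Finset (Fin n)) :=
  (Σ j : Fin m, Fin (S j).card) ⊕ (Fin m ⊕ (Unit ⊕ Fin (n ^ 2 * m)))

/-- Applicants of the set-cover reduction: the dummies `t_j^l`, the applicants `a_j^l`,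
the element applicants `e_i`, the dummy `f'`, and the dummies `y^l`. -/
abbrev ApplSC (n m : ℕ) (S : Fin m → Finset (Fin n)) :=
  (Σ j : Fin m, Fin (S j).card) ⊕
    ((Fin m × Fin (n ^ 2 * m)) ⊕ (Fin n ⊕ (Unit ⊕ Fin (n ^ 2 * m))))

def hsSC {n m : ℕ} {S : Fin m → Finset (Fin n)} (p : Σ j : Fin m, Fin (S j).card) :
    HouseSC n m S := Sum.inl p
def hwSC {n m : ℕ} {S : Fin m → Finset (Fin n)} (j : Fin m) : HouseSC n m S :=
  Sum.inr (Sum.inl j)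
def hfSC {n m : ℕ} {S : Fin m → Finset (Fin n)} : HouseSC n m S :=
  Sum.inr (Sum.inr (Sum.inl ()))
def hxSC {n m : ℕ} {S : Fin m → Finset (Fin n)} (l : Fin (n ^ 2 * m)) : HouseSC n m S :=
  Sum.inr (Sum.inr (Sum.inr l))

/-- Initial capacities: `q[s_j^l] = 1`, `q[w_j] = N`, `q[f] = 1`, `q[x^l] = 1`. -/
def capSC {n m : ℕ} {S : Fin m → Finset (Fin n)} : HouseSC n m S → ℕ
  | Sum.inl _ => 1
  | Sum.inr (Sum.inl _) => n ^ 2 * m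
  | Sum.inr (Sum.inr (Sum.inl _)) => 1
  | Sum.inr (Sum.inr (Sum.inr _)) => 1

/-- The set-cover reduction instance (with capacity vector `c`):
`t_j^l : s_j^l`; `a_j^l : x^l ≻ s_j^1 ≻ ⋯ ≻ s_j^{l_j} ≻ w_j`; `e_i : f` followed by the
houses `s_j^l` such that `e_i ∈ S_j` and `e_i` is the `l`-th smallest-index element of
`S_j`, in increasing order of `j`; `f' : f`; `y^l : x^l`. -/
def instSC (n m : ℕ) (S : Fin m → Finset (Fin n)) (c : HouseSC n m S → ℕ) :
    HA (ApplSC n m S) (HouseSC n m S) where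
  pref := fun a =>
    match a with
    | Sum.inl p => [hsSC p]
    | Sum.inr (Sum.inl (j, l)) =>
        hxSC l :: (((List.finRange (S j).card).map fun i => hsSC ⟨j, i⟩) ++ [hwSC j])
    | Sum.inr (Sum.inr (Sum.inl i)) =>
        hfSC :: (List.finRange m).filterMap fun j =>
          if h : i ∈ S j then
            some (hsSC ⟨j, ((S j).orderIsoOfFin rfl).symm ⟨i, h⟩⟩)
          else none
    | Sum.inr (Sum.inr (Sum.inr (Sum.inl _))) => [hfSC]
    | Sum.inr (Sum.inr (Sum.inr (Sum.inr l))) => [hxSC l]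
  cap := c


lemma List.idxOf_map_of_injective {α β : Type*} [BEq α] [LawfulBEq α] [BEq β] [LawfulBEq β]
    {g : α → β} (hg : Function.Injective g) (l : List α) (a : α) :
    (l.map g).idxOf (g a) = l.idxOf a := by
  induction l with
  | nil => rfl
  | cons b t ih =>
    rcases eq_or_ne b a with rfl | hne
    · simp
    · rw [List.map_cons, List.idxOf_cons_ne _ (hg.ne hne), List.idxOf_cons_ne _ hne, ih]

section Better

variable {H : Type*} {l l₁ l₂ : List H} {a b x : H}

lemma better_irrefl (l : List H) (o : Option H) : ¬ Better l o o := by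
  rcases o with _ | h
  · exact id
  · exact fun hb => lt_irrefl _ hb.2

lemma Better.asymm {o o' : Option H} (hb : Better l o o') : ¬ Better l o' o := by
  rcases o with _ | h <;> rcases o' with _ | h'
  · exact id
  · exact hb.elim
  · exact id
  · exact fun hb' => lt_asymm hb.2 hb'.2

lemma Better.mem {o : Option H} (hb : Better l (some a) o) : a ∈ l := by
  rcases o with _ | h
  exacts [hb, hb.1]

lemma better_cons_self (t : List H) (hne : b ≠ a) : Better (a :: t) (some a) (some b) :=
  ⟨List.mem_cons_self, by rw [List.idxOf_cons_self, List.idxOf_cons_ne _ hne.symm]; omega⟩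

lemma Better.cons (hb : Better l (some a) (some b)) (hxa : x ≠ a) (hxb : x ≠ b) :
    Better (x :: l) (some a) (some b) :=
  ⟨List.mem_cons_of_mem _ hb.1, by
    rw [List.idxOf_cons_ne _ hxa, List.idxOf_cons_ne _ hxb]; exact Nat.succ_lt_succ hb.2⟩

lemma Better.append_right (hb : Better l₁ (some a) (some b)) :
    Better (l₁ ++ l₂) (some a) (some b) :=
  ⟨List.mem_append_left _ hb.1, by
    rw [List.idxOf_append_of_mem hb.1]
    exact hb.2.trans_le ((List.prefix_append l₁ l₂).idxOf_le b)⟩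

lemma better_append_of_mem_of_notMem (ha : a ∈ l₁) (hb : b ∉ l₁) :
    Better (l₁ ++ l₂) (some a) (some b) :=
  ⟨List.mem_append_left _ ha, by
    rw [List.idxOf_append_of_mem ha, List.idxOf_append_of_notMem hb]
    exact (List.idxOf_lt_length_of_mem ha).trans_le (Nat.le_add_right _ _)⟩

lemma Better.map {H' : Type*} {g : H → H'} (hg : Function.Injective g)
    (hb : Better l (some a) (some b)) : Better (l.map g) (some (g a)) (some (g b)) :=
  ⟨List.mem_map_of_mem hb.1, by
    rw [List.idxOf_map_of_injective hg, List.idxOf_map_of_injective hg]; exact hb.2⟩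

/-- `Better` compares positions under the classical `BEq`, `List.idxOf_finRange` under the one of
`Fin`; `convert` identifies the two lawful instances. -/
lemma better_finRange {k : ℕ} {i i' : Fin k} (h : i < i') :
    Better (List.finRange k) (some i) (some i') :=
  ⟨List.mem_finRange i, by
    convert (show (List.finRange k).idxOf i < (List.finRange k).idxOf i' by simpa using h)⟩

end Better

namespace HA

variable {A H : Type*} [Fintype A] {I : HA A H} {M M' : A → Option H}

@[simp]
lemma mem_matchedTo {a : A} {h : H} : a ∈ matchedTo M h ↔ M a = some h := by
  simp [matchedTo]

lemma matchedTo_update_subset (a : A) (o : Option H) (h : H) :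
    matchedTo (Function.update M a o) h ⊆ insert a (matchedTo M h) := by
  intro b hb
  rcases eq_or_ne b a with rfl | hba
  · exact mem_insert_self _ _
  · rw [mem_matchedTo, Function.update_of_ne hba] at hb
    exact mem_insert_of_mem (mem_matchedTo.2 hb)

lemma matchedTo_update_of_ne {a : A} {o : Option H} {h : H} (ho : o ≠ some h) :
    matchedTo (Function.update M a o) h = (matchedTo M h).erase a := by
  ext b
  rcases eq_or_ne b a with rfl | hba
  · simp [ho]
  · simp [hba]

lemma IsMatching.card_matchedTo_update_lt (hM : I.IsMatching M) {a : A} {h : H} {o : Option H}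
    (ha : M a = some h) (ho : o ≠ some h) :
    (matchedTo (Function.update M a o) h).card < I.cap h := by
  rw [matchedTo_update_of_ne ho]
  exact (card_erase_lt_of_mem (mem_matchedTo.2 ha)).trans_le (hM.2 h)

lemma IsMatching.update_none (hM : I.IsMatching M) (a : A) :
    I.IsMatching (Function.update M a none) := by
  refine ⟨fun b h hb => ?_, fun h => ?_⟩
  · rcases eq_or_ne b a with rfl | hba
    · simp at hb
    · rw [Function.update_of_ne hba] at hb
      exact hM.1 b h hb
  · rw [← matchedTo, matchedTo_update_of_ne (by simp)]
    exact (card_erase_le).trans (hM.2 h)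

lemma IsMatching.update_some (hM : I.IsMatching M) {a : A} {h : H} (ha : h ∈ I.pref a)
    (hfree : (matchedTo M h).card < I.cap h) : I.IsMatching (Function.update M a (some h)) := by
  refine ⟨fun b h' hb => ?_, fun h' => ?_⟩
  · rcases eq_or_ne b a with rfl | hba
    · rw [Function.update_self, Option.some_inj] at hb
      exact hb ▸ ha
    · rw [Function.update_of_ne hba] at hb
      exact hM.1 b h' hb
  · rw [← matchedTo]
    rcases eq_or_ne h' h with rfl | hh
    · exact (card_le_card (matchedTo_update_subset a _ h')).trans
        ((card_insert_le _ _).trans hfree)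
    · rw [matchedTo_update_of_ne (by simpa using hh.symm)]
      exact card_erase_le.trans (hM.2 h')

lemma IsMatching.card_add_one_le_cap {ι : Type*} (hM : I.IsMatching M) {h : H} {s : Finset ι}
    {g : ι → A} (hg : Set.InjOn g s) (hs : ∀ x ∈ s, M (g x) = some h) {u : A}
    (hu : M u = some h) (hus : ∀ x ∈ s, g x ≠ u) : s.card + 1 ≤ I.cap h := by
  have hsub : insert u (s.image g) ⊆ matchedTo M h := by
    refine insert_subset (mem_matchedTo.2 hu) fun b hb => ?_
    obtain ⟨x, hx, rfl⟩ := mem_image.1 hb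
    exact mem_matchedTo.2 (hs x hx)
  have hnot : u ∉ s.image g := by
    simpa using fun x hx => hus x hx
  calc s.card + 1 = (insert u (s.image g)).card := by
        rw [card_insert_of_notMem hnot, card_image_of_injOn hg]
    _ ≤ (matchedTo M h).card := card_le_card hsub
    _ ≤ I.cap h := hM.2 h

lemma IsMatching.two_le_cap (hM : I.IsMatching M) {a b : A} {h : H} (hab : a ≠ b)
    (ha : M a = some h) (hb : M b = some h) : 2 ≤ I.cap h :=
  hM.card_add_one_le_cap (s := {a}) (g := id) (by simp) (by simpa using ha) hb (by simpa using hab)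

lemma IsMatching.eq_some_of_pref_eq_singleton (hM : I.IsMatching M) {a : A} {h : H}
    (hperf : Perfect M) (hpref : I.pref a = [h]) : M a = some h := by
  obtain ⟨h', hh'⟩ := Option.isSome_iff_exists.1 (hperf a)
  have := hM.1 a h' hh'
  rw [hpref, List.mem_singleton] at this
  rw [hh', this]

lemma dominates_of_subset {W L : Finset A} (hW : ∀ a ∈ W, Better (I.pref a) (M' a) (M a))
    (hL : ∀ a, Better (I.pref a) (M a) (M' a) → a ∈ L) (hcard : L.card < W.card) :
    I.Dominates M' M :=
  calc _ ≤ L.card := card_le_card fun a ha => hL a (mem_filter.1 ha).2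
    _ < W.card := hcard
    _ ≤ _ := card_le_card fun a ha => mem_filter.2 ⟨mem_univ a, hW a ha⟩

lemma Popular.cap_le_card_matchedTo (hpop : I.Popular M) {a : A} {h : H}
    (hb : Better (I.pref a) (some h) (M a)) : I.cap h ≤ (matchedTo M h).card := by
  by_contra! hfree
  refine hpop.2 _ (hpop.1.update_some hb.mem hfree) (dominates_of_subset (W := {a}) (L := ∅)
    (by simpa using hb) (fun b hb' => ?_) (by simp))
  rcases eq_or_ne b a with rfl | hba
  · rw [Function.update_self] at hb'
    exact (hb.asymm hb').elim
  · rw [Function.update_of_ne hba] at hb'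
    exact (better_irrefl _ _ hb').elim

/-- Otherwise `p` moves to `h₁`, its occupant `z` to `h₂`, and `u` is evicted:
two applicants gain and one loses. -/
lemma Popular.eq_of_better_chain (hpop : I.Popular M) {p z u : A} {h₁ h₂ : H}
    (hp : Better (I.pref p) (some h₁) (M p)) (hz : M z = some h₁)
    (hz' : Better (I.pref z) (some h₂) (some h₁)) (hu : M u = some h₂) : u = p := by
  by_contra hup
  have hpz : p ≠ z := by rintro rfl; exact better_irrefl _ _ (hz ▸ hp)
  have hh : h₁ ≠ h₂ := by rintro rfl; exact better_irrefl _ _ hz'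
  have hzu : z ≠ u := by rintro rfl; exact hh (Option.some_inj.1 (hz.symm.trans hu))
  have hM₁z : Function.update M u none z = some h₁ := by
    rw [Function.update_of_ne hzu]; exact hz
  have hM₂ : I.IsMatching (Function.update (Function.update M u none) z (some h₂)) :=
    (hpop.1.update_none u).update_some hz'.mem (hpop.1.card_matchedTo_update_lt hu (by simp))
  have hM' := hM₂.update_some hp.mem
    ((hpop.1.update_none u).card_matchedTo_update_lt hM₁z (by simpa using hh.symm))
  set M' := Function.update (Function.update (Function.update M u none) z (some h₂)) p (some h₁)
    with hM'def
  have hM'p : M' p = some h₁ := Function.update_self ..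
  have hM'z : M' z = some h₂ := by
    rw [hM'def, Function.update_of_ne hpz.symm, Function.update_self]
  have hM'a : ∀ a, a ≠ p → a ≠ z → a ≠ u → M' a = M a := fun a hap haz hau => by
    rw [hM'def, Function.update_of_ne hap, Function.update_of_ne haz, Function.update_of_ne hau]
  refine hpop.2 M' hM' (dominates_of_subset (W := {p, z}) (L := {u}) ?_ ?_ ?_)
  · simp only [mem_insert, mem_singleton, forall_eq_or_imp, forall_eq, hM'p, hM'z, hz]
    exact ⟨hp, hz'⟩
  · intro a ha
    rw [mem_singleton]
    by_contra hau
    rcases eq_or_ne a p with rfl | hap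
    · exact hp.asymm (hM'p ▸ ha)
    rcases eq_or_ne a z with rfl | haz
    · rw [hM'z, hz] at ha
      exact hz'.asymm ha
    rw [hM'a a hap haz hau] at ha
    exact better_irrefl _ _ ha
  · rw [card_pair hpz, card_singleton]
    exact one_lt_two

end HA

lemma exists_cover_card_le_add {α ι : Type*} [DecidableEq ι] (S : ι → Finset α)
    (hcover : ∀ a, ∃ j, a ∈ S j) (J : Finset ι) (U : Finset α)
    (hU : ∀ a, (¬ ∃ j ∈ J, a ∈ S j) → a ∈ U) :
    ∃ J' : Finset ι, J'.card ≤ J.card + U.card ∧ ∀ a, ∃ j ∈ J', a ∈ S j := by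
  choose g hg using hcover
  refine ⟨J ∪ U.image g, (card_union_le _ _).trans (Nat.add_le_add_left card_image_le _),
    fun a => ?_⟩
  by_cases ha : ∃ j ∈ J, a ∈ S j
  · obtain ⟨j, hj, haj⟩ := ha
    exact ⟨j, mem_union_left _ hj, haj⟩
  · exact ⟨g a, mem_union_right _ (mem_image_of_mem g (hU a ha)), hg a⟩

lemma le_of_mul_sub_le_mul {a m q t : ℕ} (ham : a ≤ m) (htq : t < q)
    (h : a * (q * m - t) ≤ q * m * t) : a ≤ t := by
  by_contra! hta
  have hqm : t ≤ q * m := by nlinarith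
  zify [hqm] at h
  nlinarith

section SetCoverReduction

variable {n m : ℕ} {S : Fin m → Finset (Fin n)} {c : HouseSC n m S → ℕ}
  {M : ApplSC n m S → Option (HouseSC n m S)}

def tSC (p : Σ j : Fin m, Fin (S j).card) : ApplSC n m S := Sum.inl p
def aSC (j : Fin m) (l : Fin (n ^ 2 * m)) : ApplSC n m S := Sum.inr (Sum.inl (j, l))
def eSC (i : Fin n) : ApplSC n m S := Sum.inr (Sum.inr (Sum.inl i))
def f'SC : ApplSC n m S := Sum.inr (Sum.inr (Sum.inr (Sum.inl ())))
def ySC (l : Fin (n ^ 2 * m)) : ApplSC n m S := Sum.inr (Sum.inr (Sum.inr (Sum.inr l)))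

lemma pref_aSC (j : Fin m) (l : Fin (n ^ 2 * m)) :
    (instSC n m S c).pref (aSC j l) =
      hxSC l :: (((List.finRange (S j).card).map fun i => hsSC ⟨j, i⟩) ++ [hwSC j]) := rfl

lemma hsSC_mk_injective (j : Fin m) :
    Function.Injective fun i : Fin (S j).card => (hsSC ⟨j, i⟩ : HouseSC n m S) := by
  intro i i' h
  simpa [hsSC] using h

lemma better_pref_aSC_hsSC_hwSC (j : Fin m) (l : Fin (n ^ 2 * m)) (i : Fin (S j).card) :
    Better ((instSC n m S c).pref (aSC j l)) (some (hsSC ⟨j, i⟩)) (some (hwSC j)) :=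
  (better_append_of_mem_of_notMem (by simp) (by simp [hwSC, hsSC])).cons
    (by simp [hsSC, hxSC]) (by simp [hwSC, hxSC])

lemma better_pref_aSC_hsSC_hsSC (j : Fin m) (l : Fin (n ^ 2 * m)) {i i' : Fin (S j).card}
    (hii' : i < i') :
    Better ((instSC n m S c).pref (aSC j l)) (some (hsSC ⟨j, i⟩)) (some (hsSC ⟨j, i'⟩)) :=
  (((better_finRange hii').map (hsSC_mk_injective j)).append_right).cons
    (by simp [hsSC, hxSC]) (by simp [hsSC, hxSC])

lemma better_pref_aSC_hxSC (j : Fin m) (l : Fin (n ^ 2 * m)) (p : Σ j : Fin m, Fin (S j).card) :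
    Better ((instSC n m S c).pref (aSC j l)) (some (hxSC l)) (some (hsSC p)) :=
  better_cons_self _ (by simp [hsSC, hxSC])

lemma better_pref_eSC_hfSC (i : Fin n) (p : Σ j : Fin m, Fin (S j).card) :
    Better ((instSC n m S c).pref (eSC i)) (some hfSC) (some (hsSC p)) :=
  better_cons_self _ (by simp [hsSC, hfSC])

lemma mem_pref_aSC {j : Fin m} {l : Fin (n ^ 2 * m)} {h : HouseSC n m S}
    (hh : h ∈ (instSC n m S c).pref (aSC j l)) :
    h = hxSC l ∨ (∃ i, h = hsSC ⟨j, i⟩) ∨ h = hwSC j := by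
  simp only [pref_aSC, List.mem_cons, List.mem_append, List.mem_map, List.mem_finRange,
    true_and, List.not_mem_nil, or_false] at hh
  rcases hh with h | ⟨i, rfl⟩ | h
  exacts [Or.inl h, Or.inr (Or.inl ⟨i, rfl⟩), Or.inr (Or.inr h)]

lemma mem_pref_eSC {i : Fin n} {h : HouseSC n m S} (hh : h ∈ (instSC n m S c).pref (eSC i)) :
    h = hfSC ∨ ∃ j, i ∈ S j ∧ ∃ i', h = hsSC ⟨j, i'⟩ := by
  rcases List.mem_cons.1 hh with rfl | hh
  · exact Or.inl rfl
  obtain ⟨j, -, hj⟩ := List.mem_filterMap.1 hh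
  by_cases hij : i ∈ S j
  · rw [dif_pos hij, Option.some_inj] at hj
    exact Or.inr ⟨j, hij, _, hj.symm⟩
  · simp [hij] at hj

lemma eq_of_hsSC_mem_pref {j : Fin m} {i : Fin (S j).card} {z : ApplSC n m S}
    (hz : hsSC ⟨j, i⟩ ∈ (instSC n m S c).pref z) :
    z = tSC ⟨j, i⟩ ∨ (∃ l, z = aSC j l) ∨ ∃ i', z = eSC i' := by
  rcases z with p | ⟨⟨j', l⟩ | i' | u | l⟩
  · left
    simpa [instSC, hsSC, tSC, eq_comm] using hz
  · rcases mem_pref_aSC hz with h | ⟨i', h⟩ | h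
    · simp [hsSC, hxSC] at h
    · simp only [hsSC, Sum.inl.injEq, Sigma.mk.injEq] at h
      exact Or.inr (Or.inl ⟨l, by rw [h.1]; rfl⟩)
    · simp [hsSC, hwSC] at h
  · exact Or.inr (Or.inr ⟨i', rfl⟩)
  · simp [instSC, hsSC, hfSC] at hz
  · simp [instSC, hsSC, hxSC] at hz

lemma tSC_matched (hM : (instSC n m S c).IsMatching M) (hperf : HA.Perfect M)
    (p : Σ j : Fin m, Fin (S j).card) : M (tSC p) = some (hsSC p) :=
  hM.eq_some_of_pref_eq_singleton hperf rfl

lemma ySC_matched (hM : (instSC n m S c).IsMatching M) (hperf : HA.Perfect M)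
    (l : Fin (n ^ 2 * m)) : M (ySC l) = some (hxSC l) :=
  hM.eq_some_of_pref_eq_singleton hperf rfl

lemma f'SC_matched (hM : (instSC n m S c).IsMatching M) (hperf : HA.Perfect M) :
    M f'SC = some hfSC :=
  hM.eq_some_of_pref_eq_singleton hperf rfl

lemma two_le_cap_of_matched_hsSC (hM : (instSC n m S c).IsMatching M) (hperf : HA.Perfect M)
    {p : Σ j : Fin m, Fin (S j).card} {a : ApplSC n m S} (hat : a ≠ tSC p)
    (ha : M a = some (hsSC p)) : 2 ≤ c (hsSC p) :=
  hM.two_le_cap hat ha (tSC_matched hM hperf p)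

/-- Otherwise `s_j^i` is full, so besides `t_j^i` it holds some `a_j^{l'}` or `e_{i'}`, whose
first choice is held by a dummy applicant: a chain of improvements as in
`HA.Popular.eq_of_better_chain`. -/
lemma not_better_hsSC_pref_aSC (hperf : HA.Perfect M) (hpop : (instSC n m S c).Popular M)
    {j : Fin m} {i : Fin (S j).card} (hcap : 2 ≤ c (hsSC ⟨j, i⟩)) (l : Fin (n ^ 2 * m)) :
    ¬ Better ((instSC n m S c).pref (aSC j l)) (some (hsSC ⟨j, i⟩)) (M (aSC j l)) := by
  intro hb
  have hfull : 2 ≤ (HA.matchedTo M (hsSC ⟨j, i⟩)).card :=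
    hcap.trans (hpop.cap_le_card_matchedTo hb)
  obtain ⟨z, hz, hzt⟩ := exists_mem_ne hfull (tSC ⟨j, i⟩)
  rw [HA.mem_matchedTo] at hz
  rcases eq_of_hsSC_mem_pref (hpop.1.1 z _ hz) with rfl | ⟨l', rfl⟩ | ⟨i', rfl⟩
  · exact hzt rfl
  · have := hpop.eq_of_better_chain hb hz (better_pref_aSC_hxSC j l' _)
      (ySC_matched hpop.1 hperf l')
    simp [ySC, aSC] at this
  · have := hpop.eq_of_better_chain hb hz (better_pref_eSC_hfSC i' _)
      (f'SC_matched hpop.1 hperf)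
    simp [f'SC, aSC] at this

lemma exists_aSC_matched_hsSC (hperf : HA.Perfect M) (hpop : (instSC n m S c).Popular M)
    {j : Fin m} {i : Fin (S j).card} (hcap : 2 ≤ c (hsSC ⟨j, i⟩)) {l : Fin (n ^ 2 * m)}
    (hl : M (aSC j l) ≠ some (hxSC l)) : ∃ i', M (aSC j l) = some (hsSC ⟨j, i'⟩) := by
  obtain ⟨h, hh⟩ := Option.isSome_iff_exists.1 (hperf (aSC j l))
  rcases mem_pref_aSC (hpop.1.1 _ _ hh) with rfl | ⟨i', rfl⟩ | rfl
  · exact absurd hh hl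
  · exact ⟨i', hh⟩
  · exact absurd (hh ▸ better_pref_aSC_hsSC_hwSC j l i)
      (not_better_hsSC_pref_aSC hperf hpop hcap l)

lemma le_of_aSC_matched_hsSC (hperf : HA.Perfect M) (hpop : (instSC n m S c).Popular M)
    {j : Fin m} {l l' : Fin (n ^ 2 * m)} {i i' : Fin (S j).card}
    (hl : M (aSC j l) = some (hsSC ⟨j, i⟩)) (hl' : M (aSC j l') = some (hsSC ⟨j, i'⟩)) :
    i' ≤ i := by
  by_contra! hlt
  have hcap := two_le_cap_of_matched_hsSC hpop.1 hperf (by simp [aSC, tSC]) hl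
  exact not_better_hsSC_pref_aSC hperf hpop hcap l' (hl' ▸ better_pref_aSC_hsSC_hsSC j l' hlt)

lemma card_filter_aSC_ne_hxSC_le (hperf : HA.Perfect M) (hpop : (instSC n m S c).Popular M)
    {t : ℕ} (hs : ∀ p, c (hsSC p) ≤ t + 1) {j : Fin m} {i : Fin (S j).card}
    (hcap : 2 ≤ c (hsSC ⟨j, i⟩)) :
    (univ.filter fun l => ¬ M (aSC j l) = some (hxSC l)).card ≤ t := by
  set B := univ.filter fun l => ¬ M (aSC j l) = some (hxSC l)
  rcases B.eq_empty_or_nonempty with hB | ⟨l₀, hl₀⟩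
  · simp [hB]
  obtain ⟨i₀, hi₀⟩ := exists_aSC_matched_hsSC hperf hpop hcap (mem_filter.1 hl₀).2
  have hB : ∀ l ∈ B, M (aSC j l) = some (hsSC ⟨j, i₀⟩) := by
    intro l hl
    obtain ⟨i₁, hi₁⟩ := exists_aSC_matched_hsSC hperf hpop hcap (mem_filter.1 hl).2
    rwa [le_antisymm (le_of_aSC_matched_hsSC hperf hpop hi₀ hi₁)
      (le_of_aSC_matched_hsSC hperf hpop hi₁ hi₀)] at hi₁
  have : B.card + 1 ≤ c (hsSC ⟨j, i₀⟩) := hpop.1.card_add_one_le_cap (g := aSC j)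
    (fun _ _ _ _ h => by simpa [aSC] using h) hB (tSC_matched hpop.1 hperf _) (by simp [aSC, tSC])
  have := hs ⟨j, i₀⟩
  omega

lemma card_filter_aSC_eq_hxSC_add_one_le (hM : (instSC n m S c).IsMatching M)
    (hperf : HA.Perfect M) (J : Finset (Fin m)) (l : Fin (n ^ 2 * m)) :
    (J.filter fun j => M (aSC j l) = some (hxSC l)).card + 1 ≤ c (hxSC l) :=
  hM.card_add_one_le_cap (g := fun j => aSC j l) (fun _ _ _ _ h => by simpa [aSC] using h)
    (fun _ hj => (mem_filter.1 hj).2) (ySC_matched hM hperf l) (by simp [aSC, ySC])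

lemma card_mul_le_of_two_le_cap (hperf : HA.Perfect M) (hpop : (instSC n m S c).Popular M)
    {t : ℕ} (hs : ∀ p, c (hsSC p) ≤ t + 1) (hx : ∀ l, c (hxSC l) ≤ t + 1)
    (J : Finset (Fin m)) (hJ : ∀ j ∈ J, ∃ i, 2 ≤ c (hsSC ⟨j, i⟩)) :
    J.card * (n ^ 2 * m - t) ≤ n ^ 2 * m * t := by
  have hcount := card_mul_le_card_mul (s := J) (t := univ) (m := n ^ 2 * m - t) (n := t)
    (r := fun j l => M (aSC j l) = some (hxSC l)) ?_ ?_
  · simpa using hcount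
  · intro j hj
    obtain ⟨i, hi⟩ := hJ j hj
    have hsplit := card_filter_add_card_filter_not (s := univ)
      (p := fun l => M (aSC j l) = some (hxSC l))
    have := card_filter_aSC_ne_hxSC_le hperf hpop hs hi
    rw [card_univ, Fintype.card_fin] at hsplit
    rw [bipartiteAbove, Nat.sub_le_iff_le_add]
    omega
  · intro l _
    have := card_filter_aSC_eq_hxSC_add_one_le hpop.1 hperf J l
    have := hx l
    rw [bipartiteBelow]
    omega

lemma eSC_matched (hM : (instSC n m S c).IsMatching M) (hperf : HA.Perfect M) (i : Fin n) :
    M (eSC i) = some hfSC ∨ ∃ j, i ∈ S j ∧ ∃ i', 2 ≤ c (hsSC ⟨j, i'⟩) := by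
  obtain ⟨h, hh⟩ := Option.isSome_iff_exists.1 (hperf (eSC i))
  rcases mem_pref_eSC (hM.1 _ _ hh) with rfl | ⟨j, hij, i', rfl⟩
  · exact Or.inl hh
  · exact Or.inr ⟨j, hij, i', two_le_cap_of_matched_hsSC hM hperf (by simp [eSC, tSC]) hh⟩

lemma card_uncovered_add_one_le (hM : (instSC n m S c).IsMatching M) (hperf : HA.Perfect M)
    (J : Finset (Fin m)) (hJ : ∀ j i, 2 ≤ c (hsSC ⟨j, i⟩) → j ∈ J) :
    (univ.filter fun i => ¬ ∃ j ∈ J, i ∈ S j).card + 1 ≤ c hfSC := by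
  refine hM.card_add_one_le_cap (g := eSC) (fun _ _ _ _ h => by simpa [eSC] using h)
    (fun i hi => ?_) (f'SC_matched hM hperf) (by simp [eSC, f'SC])
  rcases eSC_matched hM hperf i with hf | ⟨j, hij, i', hcap⟩
  · exact hf
  · exact absurd ⟨j, hJ j i' hcap, hij⟩ (mem_filter.1 hi).2

end SetCoverReduction

theorem change_gives_setCover_general (n m d k : ℕ) (S : Fin m → Finset (Fin n))
    (hcover : ∀ i, ∃ j, i ∈ S j) (hdk : d * k < n ^ 2)
    (r : HouseSC n m S → ℤ)
    (hinf : ∀ h, |r h| ≤ (d * k : ℤ))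
    (hM : ∃ M, HA.Perfect M ∧
      (instSC n m S fun h => ((capSC h : ℤ) + r h).toNat).Popular M) :
    (Finset.univ.filter fun j : Fin m => ∃ l, 0 < r (hsSC ⟨j, l⟩)).card ≤ d * k ∧
    n - d * k ≤ (Finset.univ.filter fun i : Fin n =>
      ∃ j ∈ Finset.univ.filter fun j : Fin m => ∃ l, 0 < r (hsSC ⟨j, l⟩),
        i ∈ S j).card ∧
    ∃ J' : Finset (Fin m), J'.card ≤ 2 * d * k ∧ ∀ i, ∃ j ∈ J', i ∈ S j := by
  obtain ⟨M, hperf, hpop⟩ := hM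
  set J := Finset.univ.filter fun j : Fin m => ∃ l, 0 < r (hsSC ⟨j, l⟩)
  have hbound (h : HouseSC n m S) (hcap : capSC h = 1) :
      ((capSC h : ℤ) + r h).toNat ≤ d * k + 1 := by
    have := abs_le.1 (hinf h); omega
  have hpos (p : Σ j : Fin m, Fin (S j).card) :
      2 ≤ ((capSC (hsSC p) : ℤ) + r (hsSC p)).toNat ↔ 0 < r (hsSC p) := by
    have : capSC (hsSC p) = 1 := rfl; omega
  have hJ : J.card ≤ d * k :=
    le_of_mul_sub_le_mul (card_le_univ J |>.trans_eq (Fintype.card_fin m)) hdk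
      (card_mul_le_of_two_le_cap hperf hpop (fun p => hbound _ rfl) (fun l => hbound _ rfl) J
        fun j hj => ((mem_filter.1 hj).2.imp fun i => (hpos _).2))
  have hU : (univ.filter fun i => ¬ ∃ j ∈ J, i ∈ S j).card ≤ d * k := by
    have hf : _ + 1 ≤ ((capSC hfSC : ℤ) + r hfSC).toNat :=
      card_uncovered_add_one_le hpop.1 hperf J fun j i hi =>
        mem_filter.2 ⟨mem_univ j, i, (hpos _).1 hi⟩
    have := hbound hfSC rfl
    omega
  have hsplit := card_filter_add_card_filter_not (s := univ) (p := fun i => ∃ j ∈ J, i ∈ S j)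
  rw [card_univ, Fintype.card_fin] at hsplit
  obtain ⟨J', hJ', hcov⟩ := exists_cover_card_le_add S hcover J _
    fun i hi => mem_filter.2 ⟨mem_univ i, hi⟩
  exact ⟨hJ, by omega, J', by rw [mul_assoc]; omega, hcov⟩

/-- suppose every element belongs to at least one set, `d, k > 0`,
`d·k < n̂²`, and `r` is a capacity change vector with `|r|_∞ ≤ d·k` such that the
reduction instance with capacities `q + r` admits a perfect popular matching. Then the
family `J` of sets `S_j` such that some house `s_j^l` has increased capacity satisfies
`|J| ≤ d·k`, the sets in `J` cover at least `n̂ − d·k` elements, and consequently the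
set cover instance admits a set cover using at most `2·d·k` sets. -/
theorem change_gives_setCover (n m d k : ℕ) (S : Fin m → Finset (Fin n))
    (hcover : ∀ i, ∃ j, i ∈ S j) (hd : 0 < d) (hk : 0 < k) (hdk : d * k < n ^ 2)
    (r : HouseSC n m S → ℤ)
    (hfeas : ∀ h, 0 ≤ (capSC h : ℤ) + r h)
    (hinf : ∀ h, |r h| ≤ (d * k : ℤ))
    (hM : ∃ M, HA.Perfect M ∧
      (instSC n m S fun h => ((capSC h : ℤ) + r h).toNat).Popular M) :
    (Finset.univ.filter fun j : Fin m => ∃ l, 0 < r (hsSC ⟨j, l⟩)).card ≤ d * k ∧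
    n - d * k ≤ (Finset.univ.filter fun i : Fin n =>
      ∃ j ∈ Finset.univ.filter fun j : Fin m => ∃ l, 0 < r (hsSC ⟨j, l⟩),
        i ∈ S j).card ∧
    ∃ J' : Finset (Fin m), J'.card ≤ 2 * d * k ∧ ∀ i, ∃ j ∈ J', i ∈ S j :=
  change_gives_setCover_general n m d k S hcover hdk r hinf hM
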